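/- arXiv:1903.08153 — 2 statements merged into one kernel-verified Lean document; each statement's English description precedes it below -/
import Mathlib

section
/- The map sending (a, b, c, h) ∈ F_q × F_q × F_q × F_2 to the function F_q → F_2, x ↦ Tr(a·x^5 + b·x^3 + c·x) + h, is injective; consequently the code C has exactly 2^(3m+1) codewords, i.e., C has dimension 3m+1 as an F_2-linear code of length 2^m. -/
/-! If `Tr (a x^5 + b x^3 + c x) + h` vanishes identically, then `h = 0` (put `x = 0`), and
polarizing gives `Tr (a (x^4 y + x y^4) + b (x^2 y + x y^2)) = 0`. Taking `x = u^4` and writing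
`a = A^4`, `b = B^4`, invariance of the trace under Frobenius turns this into `Tr (L(u) y) = 0`
for all `y`, where `L(u) = a u^16 + b u^8 + B^2 u^2 + A u`. By nondegeneracy of the trace form
`L` vanishes on `F`, and as `deg L ≤ 16 < q` all its coefficients vanish. Finally `Tr (c x) ≡ 0`
forces `c = 0`. So the encoding map is an injective additive map, and `C` is its image. -/

open Polynomial

namespace FiniteField

variable {K L : Type*} [Field K] [Fintype K] [Field L] [Algebra K L] [Finite L]

theorem trace_pow_card_pow (n : ℕ) (z : L) :
    Algebra.trace K L (z ^ Fintype.card K ^ n) = Algebra.trace K L z := by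
  have := Algebra.trace_eq_of_algEquiv (frobeniusAlgEquivOfAlgebraic K L ^ n) z
  rwa [AlgEquiv.coe_pow, coe_frobeniusAlgEquivOfAlgebraic_iterate] at this

variable (K) in
theorem exists_pow_card_pow_eq (n : ℕ) (a : L) : ∃ A : L, A ^ Fintype.card K ^ n = a := by
  obtain ⟨A, hA⟩ := (frobeniusAlgEquivOfAlgebraic K L ^ n).surjective a
  rw [AlgEquiv.coe_pow, coe_frobeniusAlgEquivOfAlgebraic_iterate] at hA
  exact ⟨A, hA⟩

theorem eq_zero_of_forall_trace_mul_eq_zero {u : L} (h : ∀ y, Algebra.trace K L (u * y) = 0) :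
    u = 0 :=
  (traceForm_nondegenerate K L).1 u h

end FiniteField

open FiniteField

theorem eq_zero_of_forall_linearized_eq_zero {R : Type*} [Field R] [Finite R]
    (hcard : 16 < Nat.card R) {a b c d : R}
    (h : ∀ u, a * u ^ 16 + b * u ^ 8 + c * u ^ 2 + d * u = 0) :
    a = 0 ∧ b = 0 ∧ c = 0 ∧ d = 0 := by
  have := Fintype.ofFinite R
  set P : R[X] := C a * X ^ 16 + C b * X ^ 8 + C c * X ^ 2 + C d * X
  have hP : P = 0 := by
    refine eq_zero_of_natDegree_lt_card_of_eval_eq_zero P Function.injective_id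
      (fun u => by simpa [P] using h u) ?_
    rw [← Nat.card_eq_fintype_card]
    exact lt_of_le_of_lt (by simp only [P]; compute_degree) hcard
  refine ⟨?_, ?_, ?_, ?_⟩
  · simpa [P] using congrArg (coeff · 16) hP
  · simpa [P] using congrArg (coeff · 8) hP
  · simpa [P] using congrArg (coeff · 2) hP
  · simpa [P] using congrArg (coeff · 1) hP

section CharTwo

variable {F : Type*} [Field F] [Algebra (ZMod 2) F]

local notation "Tr" => Algebra.trace (ZMod 2) F

theorem trace_polarization_eq_zero {a b c : F} (H : ∀ x, Tr (a * x ^ 5 + b * x ^ 3 + c * x) = 0)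
    (x y : F) : Tr (a * (x ^ 4 * y + x * y ^ 4) + b * (x ^ 2 * y + x * y ^ 2)) = 0 := by
  have h2 : (2 : F) = 0 := by
    rw [← map_ofNat (algebraMap (ZMod 2) F) 2, show (2 : ZMod 2) = 0 from rfl, map_zero]
  have hsum : a * (x + y) ^ 5 + b * (x + y) ^ 3 + c * (x + y)
      = (a * x ^ 5 + b * x ^ 3 + c * x) + (a * y ^ 5 + b * y ^ 3 + c * y)
        + (a * (x ^ 4 * y + x * y ^ 4) + b * (x ^ 2 * y + x * y ^ 2)) := by
    linear_combination (a * (2 * x ^ 4 * y + 5 * x ^ 3 * y ^ 2 + 5 * x ^ 2 * y ^ 3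
      + 2 * x * y ^ 4) + b * (x ^ 2 * y + x * y ^ 2)) * h2
  simpa [hsum, H x, H y] using H (x + y)

variable [Finite F]

theorem trace_pow_two_pow (n : ℕ) (z : F) : Tr (z ^ 2 ^ n) = Tr z := by
  simpa using trace_pow_card_pow (K := ZMod 2) n z

theorem linearized_eq_zero_of_trace_polarization {a b A B : F}
    (hA : A ^ 2 ^ 2 = a) (hB : B ^ 2 ^ 2 = b)
    (H : ∀ x y, Tr (a * (x ^ 4 * y + x * y ^ 4) + b * (x ^ 2 * y + x * y ^ 2)) = 0) (u : F) :
    a * u ^ 16 + b * u ^ 8 + B ^ 2 * u ^ 2 + A * u = 0 := by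
  refine eq_zero_of_forall_trace_mul_eq_zero (K := ZMod 2) fun y => ?_
  have hy := H (u ^ 4) y
  -- Frobenius invariance of the trace moves the powers of `y` onto `A` and `B`.
  have hexpand : a * ((u ^ 4) ^ 4 * y + u ^ 4 * y ^ 4) + b * ((u ^ 4) ^ 2 * y + u ^ 4 * y ^ 2)
      = a * u ^ 16 * y + (A * u * y) ^ 2 ^ 2 + (b * u ^ 8 * y + (B ^ 2 * u ^ 2 * y) ^ 2 ^ 1) := by
    rw [← hA, ← hB]; ring
  rw [hexpand, map_add, map_add, map_add, trace_pow_two_pow, trace_pow_two_pow] at hy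
  rw [← hy, ← map_add, ← map_add, ← map_add]
  ring_nf

theorem eq_zero_of_forall_trace_quintic_eq_zero (hcard : 16 < Nat.card F) {a b c : F}
    (H : ∀ x, Tr (a * x ^ 5 + b * x ^ 3 + c * x) = 0) : a = 0 ∧ b = 0 ∧ c = 0 := by
  obtain ⟨A, hA⟩ := exists_pow_card_pow_eq (ZMod 2) 2 a
  obtain ⟨B, hB⟩ := exists_pow_card_pow_eq (ZMod 2) 2 b
  rw [ZMod.card] at hA hB
  obtain ⟨rfl, rfl, -, -⟩ := eq_zero_of_forall_linearized_eq_zero hcard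
    (linearized_eq_zero_of_trace_polarization hA hB (trace_polarization_eq_zero H))
  exact ⟨rfl, rfl, eq_zero_of_forall_trace_mul_eq_zero fun y => by simpa using H y⟩

variable (F) in
noncomputable def traceEncoding : F × F × F × ZMod 2 →+ (F → ZMod 2) where
  toFun p x := Tr (p.1 * x ^ 5 + p.2.1 * x ^ 3 + p.2.2.1 * x) + p.2.2.2
  map_zero' := by
    funext x
    simp
  map_add' p q := by
    funext x
    rw [Pi.add_apply, add_add_add_comm, ← map_add]
    congr 2
    simp only [Prod.fst_add, Prod.snd_add]
    ring

theorem traceEncoding_injective (hcard : 16 < Nat.card F) :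
    Function.Injective (traceEncoding F) := by
  refine (injective_iff_map_eq_zero _).2 fun ⟨a, b, c, h⟩ hp => ?_
  obtain rfl : h = 0 := by simpa [traceEncoding] using congrFun hp 0
  obtain ⟨rfl, rfl, rfl⟩ := eq_zero_of_forall_trace_quintic_eq_zero hcard fun x => by
    simpa [traceEncoding] using congrFun hp x
  rfl

end CharTwo

theorem stmt_0 (s : ℕ) (hs : 3 ≤ s)
    (F : Type) [Field F] [Fintype F] [Algebra (ZMod 2) F]
    (hcard : Fintype.card F = 2 ^ (2 * s))
    (C : Set (F → ZMod 2))
    (hC : C = {f | ∃ (a b c : F) (h : ZMod 2),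
        f = fun x => Algebra.trace (ZMod 2) F (a * x ^ 5 + b * x ^ 3 + c * x) + h}) :
    Function.Injective (fun p : F × F × F × ZMod 2 =>
      fun x : F =>
        Algebra.trace (ZMod 2) F (p.1 * x ^ 5 + p.2.1 * x ^ 3 + p.2.2.1 * x) + p.2.2.2) ∧
    Nat.card C = 2 ^ (3 * (2 * s) + 1) := by
  have hcard16 : 16 < Nat.card F := by
    rw [Nat.card_eq_fintype_card, hcard]
    calc 16 < 2 ^ 6 := by norm_num
      _ ≤ 2 ^ (2 * s) := Nat.pow_le_pow_right (by norm_num) (by omega)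
  have hinj := traceEncoding_injective hcard16
  refine ⟨hinj, ?_⟩
  have hrange : C = Set.range (traceEncoding F) := by
    ext f
    simp [hC, traceEncoding, eq_comm]
  rw [hrange, Nat.card_range_of_injective hinj, Nat.card_prod, Nat.card_prod, Nat.card_prod,
    Nat.card_eq_fintype_card (α := F), hcard, Nat.card_zmod]
  ring
end

section
/- For every pair (a, b) ∈ F_q × F_q with (a, b) ≠ (0, 0), the number of solutions x ∈ F_q of the equation a^4·x^16 + b^4·x^8 + b^2·x^2 + a·x = 0 is 1, 4, or 16; equivalently, the rank r of the quadratic form x ↦ Tr(a·x^5 + b·x^3) over F_2 satisfies r ∈ {m, m−2, m−4}. -/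
/-!
The map `Q x = Tr (a x⁵ + b x³)` is a quadratic form over `𝔽₂` whose polar form is, after moving
Frobenius powers across the trace, `B x y = Tr (L x * y⁴)` with
`L x = a⁴x¹⁶ + b⁴x⁸ + b²x² + ax`; nondegeneracy of the trace form makes `ker L` the radical of `Q`.
For any quadratic form over `𝔽₂`, `|V| · |rad|` is the square of a character sum, so
`dim V + dim rad` is even. Here `dim V = 2s`, so `dim ker L` is even, and it is at most `4`
because `L` has degree `16` and is nonzero.
-/

open Module

def signChar : AddChar (ZMod 2) ℤ where
  toFun t := (-1) ^ t.val
  map_zero_eq_one' := rfl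
  map_add_eq_mul' := by decide

lemma signChar_eq_one_iff (t : ZMod 2) : signChar t = 1 ↔ t = 0 := by
  revert t; decide

lemma even_of_sq_eq_two_pow {S : ℤ} {n : ℕ} (h : S ^ 2 = 2 ^ n) : Even n := by
  have hnat : S.natAbs ^ 2 = 2 ^ n := by
    zify; rw [sq_abs, h]
  obtain ⟨k, -, hk⟩ := (Nat.dvd_prime_pow Nat.prime_two).mp (Dvd.intro_left _ (sq S.natAbs ▸ hnat))
  rw [hk, ← pow_mul] at hnat
  exact ⟨k, by rw [← Nat.pow_right_injective le_rfl hnat]; ring⟩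

section QuadraticCharSum

variable {V : Type*} [AddCommGroup V] [Module (ZMod 2) V]

lemma exists_linearMap_eq_on_ker (Q : V → ZMod 2) (B : V →ₗ[ZMod 2] V →ₗ[ZMod 2] ZMod 2)
    (hQ : ∀ x y, Q (x + y) = Q x + Q y + B x y) :
    ∃ l : V →ₗ[ZMod 2] ZMod 2, ∀ u ∈ LinearMap.ker B, l u = Q u := by
  let QK : LinearMap.ker B →+ ZMod 2 := AddMonoidHom.mk' (fun u => Q u) fun u v => by
    rw [Submodule.coe_add, hQ, LinearMap.mem_ker.mp u.2, LinearMap.zero_apply, add_zero]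
  obtain ⟨l, hl⟩ := LinearMap.exists_extend (QK.toZModLinearMap 2)
  exact ⟨l, fun u hu => LinearMap.congr_fun hl ⟨u, hu⟩⟩

variable [Fintype V]

lemma sum_signChar_linearMap (f : V →ₗ[ZMod 2] ZMod 2) :
    ∑ x, signChar (f x) = if f = 0 then (Fintype.card V : ℤ) else 0 := by
  classical
  have hψ : signChar.compAddMonoidHom f.toAddMonoidHom = 0 ↔ f = 0 := by
    simp only [AddChar.ext_iff, AddChar.compAddMonoidHom_apply, AddChar.zero_apply,
      LinearMap.ext_iff, LinearMap.zero_apply, signChar_eq_one_iff]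
    rfl
  simpa only [hψ, AddChar.compAddMonoidHom_apply, LinearMap.toAddMonoidHom_coe] using
    AddChar.sum_eq_ite (signChar.compAddMonoidHom f.toAddMonoidHom)

lemma sq_sum_signChar_eq_card_mul_card_ker (Q : V → ZMod 2)
    (B : V →ₗ[ZMod 2] V →ₗ[ZMod 2] ZMod 2) (hQ : ∀ x y, Q (x + y) = Q x + Q y + B x y)
    (hker : ∀ u ∈ LinearMap.ker B, Q u = 0) :
    (∑ x, signChar (Q x)) ^ 2 = Fintype.card V * Nat.card (LinearMap.ker B) := by
  classical
  have hsymm : ∀ x y, B x y = B y x := fun x y => by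
    have := hQ y x
    rwa [add_comm y, hQ, add_comm (Q x), add_left_cancel_iff] at this
  have hterm : ∀ x u,
      signChar (Q x) * signChar (Q (x + u)) = signChar (Q u) * signChar (B u x) := by
    intro x u
    rw [← AddChar.map_add_eq_mul, ← AddChar.map_add_eq_mul, hQ, hsymm, ← add_assoc, ← add_assoc,
      CharTwo.add_self_eq_zero, zero_add]
  calc (∑ x, signChar (Q x)) ^ 2
      = ∑ x, ∑ u, signChar (Q x) * signChar (Q (x + u)) := by
        rw [sq, Finset.sum_mul_sum]
        exact Finset.sum_congr rfl fun x _ =>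
          (Fintype.sum_equiv (Equiv.addLeft x) _ _ fun u => rfl).symm
    _ = ∑ u, signChar (Q u) * ∑ x, signChar (B u x) := by
        simp_rw [hterm, Finset.mul_sum]
        exact Finset.sum_comm
    _ = ∑ u, if u ∈ LinearMap.ker B then (Fintype.card V : ℤ) else 0 := by
        refine Finset.sum_congr rfl fun u _ => ?_
        rw [sum_signChar_linearMap]
        by_cases hu : u ∈ LinearMap.ker B
        · rw [if_pos (LinearMap.mem_ker.mp hu), if_pos hu, hker u hu, AddChar.map_zero_eq_one,
            one_mul]
        · rw [if_neg (mt LinearMap.mem_ker.mpr hu), if_neg hu, mul_zero]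
    _ = Fintype.card V * Nat.card (LinearMap.ker B) := by
        rw [Finset.sum_ite, Finset.sum_const_zero, add_zero, Finset.sum_const, nsmul_eq_mul,
          mul_comm, Nat.card_eq_fintype_card, Fintype.card_subtype]

/-- Shifting `Q` by a linear `l` that agrees with it on the radical keeps the polar form and makes
the form vanish on the radical, where `sq_sum_signChar_eq_card_mul_card_ker` applies. -/
theorem even_finrank_add_finrank_ker (Q : V → ZMod 2) (B : V →ₗ[ZMod 2] V →ₗ[ZMod 2] ZMod 2)
    (hQ : ∀ x y, Q (x + y) = Q x + Q y + B x y) :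
    Even (finrank (ZMod 2) V + finrank (ZMod 2) (LinearMap.ker B)) := by
  obtain ⟨l, hl⟩ := exists_linearMap_eq_on_ker Q B hQ
  have hQl : ∀ x y, (Q + l) (x + y) = (Q + l) x + (Q + l) y + B x y := fun x y => by
    simp only [Pi.add_apply, hQ, map_add]; ring
  have hker : ∀ u ∈ LinearMap.ker B, (Q + l) u = 0 := fun u hu => by
    rw [Pi.add_apply, hl u hu, CharTwo.add_self_eq_zero]
  apply even_of_sq_eq_two_pow (S := ∑ x, signChar ((Q + l) x))
  rw [sq_sum_signChar_eq_card_mul_card_ker _ B hQl hker, Module.card_eq_pow_finrank (K := ZMod 2),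
    Module.natCard_eq_pow_finrank (K := ZMod 2)]
  simp [pow_add]

end QuadraticCharSum

section Linearized

variable {R : Type*} [CommRing R] [CharP R 2]

def linearizedMap (a b : R) : R →+ R :=
  AddMonoidHom.mk' (fun x => a ^ 4 * x ^ 16 + b ^ 4 * x ^ 8 + b ^ 2 * x ^ 2 + a * x) fun x y => by
    have h16 := add_pow_char_pow x y 2 4
    have h8 := add_pow_char_pow x y 2 3
    have h2 := add_pow_char_pow x y 2 1
    norm_num at h16 h8 h2
    rw [h16, h8, h2]
    ring

@[simp]
lemma linearizedMap_apply (a b x : R) :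
    linearizedMap a b x = a ^ 4 * x ^ 16 + b ^ 4 * x ^ 8 + b ^ 2 * x ^ 2 + a * x := rfl

lemma add_pow_five_add_pow_three (a b x y : R) :
    a * (x + y) ^ 5 + b * (x + y) ^ 3 = (a * x ^ 5 + b * x ^ 3) + (a * y ^ 5 + b * y ^ 3) +
      (a * x ^ 4 * y + b * x ^ 2 * y) + b * x * y ^ 2 + a * x * y ^ 4 := by
  linear_combination (a * (2 * x ^ 4 * y + 5 * x ^ 3 * y ^ 2 + 5 * x ^ 2 * y ^ 3 + 2 * x * y ^ 4)
    + b * (x ^ 2 * y + x * y ^ 2)) * CharTwo.two_eq_zero (R := R)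

end Linearized

instance charP_two_of_algebra {F : Type*} [Field F] [Algebra (ZMod 2) F] : CharP F 2 :=
  charP_of_injective_algebraMap (algebraMap (ZMod 2) F).injective 2

section TraceForm

variable {F : Type*} [Field F] [Fintype F] [Algebra (ZMod 2) F]

local notation "Tr" => Algebra.trace (ZMod 2) F

local notation "frob" => FiniteField.frobeniusAlgEquivOfAlgebraic (ZMod 2) F

lemma frob_apply (z : F) : frob z = z ^ 2 := by
  rw [FiniteField.coe_frobeniusAlgEquivOfAlgebraic, ZMod.card]

lemma trace_sq (z : F) : Tr (z ^ 2) = Tr z := by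
  rw [← frob_apply, Algebra.trace_eq_of_algEquiv]

lemma trace_pow_four (z : F) : Tr (z ^ 4) = Tr z := by
  rw [show z ^ 4 = (z ^ 2) ^ 2 by ring, trace_sq, trace_sq]

lemma forall_trace_mul_pow_four_eq_zero_iff (c : F) : (∀ y, Tr (c * y ^ 4) = 0) ↔ c = 0 := by
  refine ⟨fun h => (traceForm_nondegenerate (ZMod 2) F).1 c fun z => ?_, fun hc y => by simp [hc]⟩
  obtain ⟨w, rfl⟩ := (frob).surjective z
  obtain ⟨y, rfl⟩ := (frob).surjective w
  simpa [frob_apply, ← pow_mul] using h y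

noncomputable def traceQuad (a b : F) (x : F) : ZMod 2 := Tr (a * x ^ 5 + b * x ^ 3)

noncomputable def tracePolar (a b : F) : F →ₗ[ZMod 2] F →ₗ[ZMod 2] ZMod 2 :=
  (Algebra.traceForm (ZMod 2) F).compl₁₂ ((linearizedMap a b).toZModLinearMap 2)
    ((frob).toLinearMap ∘ₗ (frob).toLinearMap)

lemma tracePolar_apply (a b x y : F) : tracePolar a b x y = Tr (linearizedMap a b x * y ^ 4) := by
  simp only [tracePolar, LinearMap.compl₁₂_apply, Algebra.traceForm_apply,
    AddMonoidHom.coe_toZModLinearMap, LinearMap.comp_apply, AlgEquiv.toLinearMap_apply, frob_apply,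
    ← pow_mul]

lemma traceQuad_add (a b x y : F) :
    traceQuad a b (x + y) = traceQuad a b x + traceQuad a b y + tracePolar a b x y := by
  have hfourth : Tr (a * x ^ 4 * y + b * x ^ 2 * y) =
      Tr (a ^ 4 * x ^ 16 * y ^ 4 + b ^ 4 * x ^ 8 * y ^ 4) := by
    have h := add_pow_char_pow (a * x ^ 4 * y) (b * x ^ 2 * y) 2 2
    norm_num at h
    rw [← trace_pow_four, h]
    ring_nf
  have hsq : Tr (b * x * y ^ 2) = Tr (b ^ 2 * x ^ 2 * y ^ 4) := by
    rw [← trace_sq]; ring_nf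
  have hcross : Tr (a * x ^ 4 * y + b * x ^ 2 * y) + Tr (b * x * y ^ 2) + Tr (a * x * y ^ 4) =
      tracePolar a b x y := by
    rw [hfourth, hsq, tracePolar_apply, ← map_add, ← map_add]
    congr 1
    simp only [linearizedMap_apply]
    ring
  rw [traceQuad, traceQuad, traceQuad, add_pow_five_add_pow_three, map_add, map_add, map_add,
    map_add, ← hcross]
  ring

lemma coe_ker_tracePolar (a b : F) :
    (LinearMap.ker (tracePolar a b) : Set F) = {x | linearizedMap a b x = 0} := by
  ext x
  simp [LinearMap.ext_iff, tracePolar_apply, forall_trace_mul_pow_four_eq_zero_iff]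

end TraceForm

open Polynomial in
lemma Polynomial.natCard_setOf_isRoot_le {R : Type*} [CommRing R] [IsDomain R] {p : R[X]}
    (hp : p ≠ 0) : Nat.card {x | p.IsRoot x} ≤ p.natDegree := by
  classical
  have hroots : {x | p.IsRoot x} = ↑p.roots.toFinset := by
    ext x; simp [mem_roots hp]
  rw [hroots, Nat.card_coe_set_eq, Set.ncard_coe_finset]
  exact (Multiset.toFinset_card_le _).trans (card_roots' p)

open Polynomial in
lemma natCard_setOf_linearizedMap_eq_zero_le {K : Type*} [Field K] [CharP K 2] {a b : K}
    (hab : (a, b) ≠ (0, 0)) : Nat.card {x | linearizedMap a b x = 0} ≤ 16 := by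
  let p : K[X] := C (a ^ 4) * X ^ 16 + C (b ^ 4) * X ^ 8 + C (b ^ 2) * X ^ 2 + C a * X
  have hp : p ≠ 0 := by
    intro hp
    have h1 : p.coeff 1 = a := by
      simp only [p, coeff_add, coeff_C_mul, coeff_X_pow, coeff_X_one]; norm_num
    have h2 : p.coeff 2 = b ^ 2 := by
      simp only [p, coeff_add, coeff_C_mul, coeff_X_pow, coeff_X]; norm_num
    rw [hp, coeff_zero] at h1 h2
    exact hab (by rw [← h1, pow_eq_zero_iff two_ne_zero |>.mp h2.symm])
  have hdeg : p.natDegree ≤ 16 := by dsimp only [p]; compute_degree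
  have hroots : {x | linearizedMap a b x = 0} = {x | p.IsRoot x} := by
    ext x; simp [p]
  rw [hroots]
  exact (natCard_setOf_isRoot_le hp).trans hdeg

theorem stmt_13_general (s : ℕ)
    (F : Type) [Field F] [Fintype F] [Algebra (ZMod 2) F]
    (hcard : Fintype.card F = 2 ^ (2 * s)) :
    ∀ a b : F, (a, b) ≠ (0, 0) →
      Nat.card {x : F | a ^ 4 * x ^ 16 + b ^ 4 * x ^ 8 + b ^ 2 * x ^ 2 + a * x = 0} ∈
        ({1, 4, 16} : Set ℕ) := by
  intro a b hab
  change Nat.card {x | linearizedMap a b x = 0} ∈ _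
  set k := finrank (ZMod 2) (LinearMap.ker (tracePolar a b))
  have hcard_ker : Nat.card {x : F | linearizedMap a b x = 0} = 2 ^ k := by
    rw [← coe_ker_tracePolar, SetLike.coe_sort_coe, Module.natCard_eq_pow_finrank (K := ZMod 2),
      Nat.card_zmod]
  have hrank : finrank (ZMod 2) F = 2 * s := Nat.pow_right_injective le_rfl <| by
    dsimp only
    rw [← hcard, Module.card_eq_pow_finrank (K := ZMod 2), ZMod.card]
  have hk_even : Even k := by
    have := even_finrank_add_finrank_ker (traceQuad a b) (tracePolar a b) (traceQuad_add a b)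
    rwa [hrank, Nat.even_add, iff_true_left (even_two_mul s)] at this
  have hk_le : k ≤ 4 := by
    have := hcard_ker ▸ natCard_setOf_linearizedMap_eq_zero_le hab
    exact (Nat.pow_le_pow_iff_right one_lt_two).mp (this.trans_eq (by norm_num))
  obtain ⟨j, hj⟩ := hk_even
  have hj_le : j ≤ 2 := by omega
  rw [hcard_ker, hj]
  interval_cases j <;> simp

theorem stmt_13 (s : ℕ) (hs : 2 ≤ s)
    (F : Type) [Field F] [Fintype F] [Algebra (ZMod 2) F]
    (hcard : Fintype.card F = 2 ^ (2 * s)) :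
    ∀ a b : F, (a, b) ≠ (0, 0) →
      Nat.card {x : F | a ^ 4 * x ^ 16 + b ^ 4 * x ^ 8 + b ^ 2 * x ^ 2 + a * x = 0} ∈
        ({1, 4, 16} : Set ℕ) :=
  stmt_13_general s F hcard
end
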